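/- arXiv:1407.5016 — 2 statements merged into one kernel-verified Lean document; each statement's English description precedes it below -/
import Mathlib

section
/- Let n ≥ 2 and 1 < p < ∞. In the real normed linear space (ℝⁿ, ‖·‖_p), let (x, y) ∈ ℝ² and set w_1 = (x, y, 0, ..., 0). If w_1 is Birkhoff-James orthogonal in (ℝⁿ, ‖·‖_p) to w_2 = (u_1, u_2, u_3, ..., u_n), then (x, y) is Birkhoff-James orthogonal to (u_1, u_2) in (ℝ², ‖·‖_p); moreover, if (u_1, u_2, ..., u_n) is Birkhoff-James orthogonal to (x, y, 0, ..., 0) in (ℝⁿ, ‖·‖_p), then (u_1, u_2) is Birkhoff-James orthogonal to (x, y) in (ℝ², ‖·‖_p). -/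
/-!
Cutting `‖·‖_p ^ p` on `ℝ^(n+2)` after the second coordinate splits it into the `ℓ^p` norm of the
planar part plus the `p`-th power sum `K` of the tail. In `‖w₂ + t • w₁‖ ^ p` the tail term is
constant, so the second claim is immediate. In `‖w₁ + t • w₂‖ ^ p` it is `|t| ^ p * K`, which is
`o(t)` because `p > 1`: applying the hypothesis at `t = s * l` and bounding
`‖v + (s * l) • u‖ ^ p` by convexity gives `‖v‖ ^ p ≤ ‖v + l • u‖ ^ p + s ^ (p - 1) * |l| ^ p * K`,
and `s → 0⁺` yields the first claim.
-/

/-- The vector `(a, b)` viewed as an element of `(ℝ², ‖·‖_p)`. -/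
noncomputable def vecP (p : ℝ) (a b : ℝ) : PiLp (ENNReal.ofReal p) (fun _ : Fin 2 => ℝ) :=
  (WithLp.equiv (ENNReal.ofReal p) (Fin 2 → ℝ)).symm ![a, b]

open Filter Topology Set

def IsBJOrthogonal {E : Type*} [SeminormedAddCommGroup E] [NormedSpace ℝ E] (v u : E) : Prop :=
  ∀ l : ℝ, ‖v‖ ≤ ‖v + l • u‖

lemma le_of_forall_le_add_mul_rpow {A B C q : ℝ} (hq : 0 < q)
    (h : ∀ s ∈ Ioo (0 : ℝ) 1, A ≤ B + C * s ^ q) : A ≤ B := by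
  have hlim : Tendsto (fun s : ℝ => B + C * s ^ q) (𝓝[>] 0) (𝓝 B) := by
    have hcont : Continuous fun s : ℝ => B + C * s ^ q :=
      continuous_const.add (continuous_const.mul (Real.continuous_rpow_const hq.le))
    simpa [Real.zero_rpow hq.ne'] using (hcont.tendsto 0).mono_left nhdsWithin_le_nhds
  exact ge_of_tendsto hlim (eventually_of_mem (Ioo_mem_nhdsGT one_pos) h)

section NormedSpace

variable {E : Type*} [SeminormedAddCommGroup E] [NormedSpace ℝ E]

lemma rpow_norm_add_mul_smul_le {p s : ℝ} (hp : 1 ≤ p) (hs₀ : 0 ≤ s) (hs₁ : s ≤ 1)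
    (v u : E) (l : ℝ) :
    ‖v + (s * l) • u‖ ^ p ≤ (1 - s) * ‖v‖ ^ p + s * ‖v + l • u‖ ^ p := by
  have hsegment : v + (s * l) • u = (1 - s) • v + s • (v + l • u) := by
    rw [smul_add, smul_smul, sub_smul, one_smul]
    abel
  have hnorm : ‖v + (s * l) • u‖ ≤ (1 - s) * ‖v‖ + s * ‖v + l • u‖ := by
    rw [hsegment]
    refine (norm_add_le _ _).trans_eq ?_
    rw [norm_smul, norm_smul, Real.norm_of_nonneg (sub_nonneg.2 hs₁), Real.norm_of_nonneg hs₀]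
  calc ‖v + (s * l) • u‖ ^ p ≤ ((1 - s) * ‖v‖ + s * ‖v + l • u‖) ^ p :=
        Real.rpow_le_rpow (norm_nonneg _) hnorm (by linarith)
    _ ≤ (1 - s) * ‖v‖ ^ p + s * ‖v + l • u‖ ^ p :=
        (convexOn_rpow hp).2 (norm_nonneg v) (norm_nonneg (v + l • u)) (sub_nonneg.2 hs₁) hs₀
          (by ring)

lemma isBJOrthogonal_of_rpow_le {p : ℝ} (hp : 0 < p) {v u : E}
    (h : ∀ t : ℝ, ‖v‖ ^ p ≤ ‖v + t • u‖ ^ p) : IsBJOrthogonal v u := fun l =>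
  (Real.rpow_le_rpow_iff (norm_nonneg _) (norm_nonneg _) hp).1 (h l)

lemma isBJOrthogonal_of_rpow_le_add {p C : ℝ} (hp : 1 < p) {v u : E}
    (h : ∀ t : ℝ, ‖v‖ ^ p ≤ ‖v + t • u‖ ^ p + |t| ^ p * C) : IsBJOrthogonal v u := by
  refine isBJOrthogonal_of_rpow_le (by linarith) fun l => ?_
  refine le_of_forall_le_add_mul_rpow (C := |l| ^ p * C) (sub_pos.2 hp) fun s ⟨hs₀, hs₁⟩ => ?_
  have hconv := rpow_norm_add_mul_smul_le hp.le hs₀.le hs₁.le v u l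
  have hs : s ^ p = s * s ^ (p - 1) := by
    rw [← Real.rpow_one_add' hs₀.le (by linarith)]; ring_nf
  have hsl := h (s * l)
  rw [abs_mul, abs_of_pos hs₀, Real.mul_rpow hs₀.le (abs_nonneg l), hs] at hsl
  have hscaled : s * ‖v‖ ^ p ≤ s * (‖v + l • u‖ ^ p + |l| ^ p * C * s ^ (p - 1)) := by
    linarith
  exact le_of_mul_le_mul_left hscaled hs₀

end NormedSpace

lemma PiLp.norm_rpow_eq_sum_ofReal {ι : Type*} [Fintype ι] {β : ι → Type*}
    [∀ i, SeminormedAddCommGroup (β i)] {p : ℝ} (hp : 0 < p) (f : PiLp (ENNReal.ofReal p) β) :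
    ‖f‖ ^ p = ∑ i, ‖f i‖ ^ p := by
  have hp' : (ENNReal.ofReal p).toReal = p := ENNReal.toReal_ofReal hp.le
  rw [PiLp.norm_eq_sum (hp'.symm ▸ hp), hp', ← Real.rpow_mul (by positivity),
    one_div_mul_cancel hp.ne', Real.rpow_one]

lemma vecP_add_smul (p a b c d l : ℝ) :
    vecP p a b + l • vecP p c d = vecP p (a + l * c) (b + l * d) := by
  ext i
  fin_cases i <;> simp [vecP]

lemma rpow_norm_eq_rpow_norm_vecP_add {n : ℕ} {p : ℝ} (hp : 0 < p)
    (z : PiLp (ENNReal.ofReal p) (fun _ : Fin (n + 2) => ℝ)) :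
    ‖z‖ ^ p = ‖vecP p (z 0) (z 1)‖ ^ p + ∑ i : Fin n, |z i.succ.succ| ^ p := by
  rw [PiLp.norm_rpow_eq_sum_ofReal hp, PiLp.norm_rpow_eq_sum_ofReal hp, Fin.sum_univ_two,
    Fin.sum_univ_succ, Fin.sum_univ_succ, ← add_assoc]
  simp [vecP]

lemma rpow_norm_add_smul_eq_of_tail_eq_zero_left {n : ℕ} {p : ℝ} (hp : 0 < p)
    {w₁ : PiLp (ENNReal.ofReal p) (fun _ : Fin (n + 2) => ℝ)} (hw₁ : ∀ i : Fin n, w₁ i.succ.succ = 0)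
    (w₂ : PiLp (ENNReal.ofReal p) (fun _ : Fin (n + 2) => ℝ)) (t : ℝ) :
    ‖w₁ + t • w₂‖ ^ p = ‖vecP p (w₁ 0) (w₁ 1) + t • vecP p (w₂ 0) (w₂ 1)‖ ^ p
      + |t| ^ p * ∑ i : Fin n, |w₂ i.succ.succ| ^ p := by
  rw [rpow_norm_eq_rpow_norm_vecP_add hp, vecP_add_smul, Finset.mul_sum]
  simp [hw₁, abs_mul, Real.mul_rpow]

lemma rpow_norm_add_smul_eq_of_tail_eq_zero_right {n : ℕ} {p : ℝ} (hp : 0 < p)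
    {w₁ : PiLp (ENNReal.ofReal p) (fun _ : Fin (n + 2) => ℝ)} (hw₁ : ∀ i : Fin n, w₁ i.succ.succ = 0)
    (w₂ : PiLp (ENNReal.ofReal p) (fun _ : Fin (n + 2) => ℝ)) (t : ℝ) :
    ‖w₂ + t • w₁‖ ^ p = ‖vecP p (w₂ 0) (w₂ 1) + t • vecP p (w₁ 0) (w₁ 1)‖ ^ p
      + ∑ i : Fin n, |w₂ i.succ.succ| ^ p := by
  rw [rpow_norm_eq_rpow_norm_vecP_add hp, vecP_add_smul]
  simp [hw₁]

theorem stmt_8 (n : ℕ) (p : ℝ) (hp : 1 < p) [Fact (1 ≤ ENNReal.ofReal p)]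
    (x y : ℝ)
    (w₁ : PiLp (ENNReal.ofReal p) (fun _ : Fin (n + 2) => ℝ))
    (hw₁ : w₁ = (WithLp.equiv (ENNReal.ofReal p) (Fin (n + 2) → ℝ)).symm
      (fun i => if i = 0 then x else if i = 1 then y else 0))
    (w₂ : PiLp (ENNReal.ofReal p) (fun _ : Fin (n + 2) => ℝ)) :
    ((∀ l : ℝ, ‖w₁‖ ≤ ‖w₁ + l • w₂‖) →
      ∀ l : ℝ, ‖vecP p x y‖ ≤
        ‖vecP p x y + l • vecP p (WithLp.equiv _ _ w₂ 0) (WithLp.equiv _ _ w₂ 1)‖) ∧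
    ((∀ l : ℝ, ‖w₂‖ ≤ ‖w₂ + l • w₁‖) →
      ∀ l : ℝ, ‖vecP p (WithLp.equiv _ _ w₂ 0) (WithLp.equiv _ _ w₂ 1)‖ ≤
        ‖vecP p (WithLp.equiv _ _ w₂ 0) (WithLp.equiv _ _ w₂ 1) + l • vecP p x y‖) := by
  have hp₀ : 0 < p := by linarith
  have htail : ∀ i : Fin n, w₁ i.succ.succ = 0 := fun i => by
    simp [hw₁, Fin.succ_succ_ne_one]
  have hxy : vecP p x y = vecP p (w₁ 0) (w₁ 1) := by simp [hw₁]
  have hnorm₁ := rpow_norm_add_smul_eq_of_tail_eq_zero_left hp₀ htail w₂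
  have hnorm₂ := rpow_norm_add_smul_eq_of_tail_eq_zero_right hp₀ htail w₂
  have hnorm₁_zero : ‖w₁‖ ^ p = ‖vecP p (w₁ 0) (w₁ 1)‖ ^ p := by
    simpa [hp₀.ne'] using hnorm₁ 0
  have hnorm₂_zero : ‖w₂‖ ^ p = ‖vecP p (w₂ 0) (w₂ 1)‖ ^ p + ∑ i : Fin n, |w₂ i.succ.succ| ^ p := by
    simpa using hnorm₂ 0
  simp only [WithLp.equiv_apply, hxy]
  refine ⟨fun h => isBJOrthogonal_of_rpow_le_add hp fun t => by
      rw [← hnorm₁_zero, ← hnorm₁]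
      exact Real.rpow_le_rpow (norm_nonneg _) (h t) hp₀.le,
    fun h => isBJOrthogonal_of_rpow_le hp₀ fun t => ?_⟩
  have := Real.rpow_le_rpow (norm_nonneg _) (h t) hp₀.le
  rw [hnorm₂_zero, hnorm₂] at this
  linarith
end

section
/- Let X be a smooth real normed linear space with a strongly orthonormal Hamel basis {x_1, ..., x_n} in the sense of Birkhoff-James, and let y = α_1 x_1 + α_2 x_2 + ... + α_n x_n. If x_1 is Birkhoff-James orthogonal to y, then α_1 = 0. -/
/-- `x` together with the family is strongly orthonormal *relative to* the element `x i₀`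
in the sense of Birkhoff-James: all members are unit vectors and
`‖x i₀‖ < ‖x i₀ + ∑_{j ≠ i₀} c j • x j‖` whenever not all the `c j` (`j ≠ i₀`) vanish. -/
def StronglyOrthRel {X : Type*} [NormedAddCommGroup X] [NormedSpace ℝ X]
    {n : ℕ} (x : Fin n → X) (i₀ : Fin n) : Prop :=
  (∀ i, ‖x i‖ = 1) ∧
    ∀ c : Fin n → ℝ, (∃ j, j ≠ i₀ ∧ c j ≠ 0) →
      ‖x i₀‖ < ‖x i₀ + ∑ j ∈ Finset.univ.erase i₀, c j • x j‖

/-- A finite family of unit vectors that is strongly orthonormal in the sense of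
Birkhoff-James. -/
def StronglyOrthSet {X : Type*} [NormedAddCommGroup X] [NormedSpace ℝ X]
    {n : ℕ} (x : Fin n → X) : Prop :=
  ∀ i, StronglyOrthRel x i


/-- A real normed linear space is smooth if every nonzero vector has a unique norming
functional: a continuous linear functional `f` with `‖f‖ = 1` and `f x = ‖x‖`. -/
def SmoothSpace (X : Type*) [NormedAddCommGroup X] [NormedSpace ℝ X] : Prop :=
  ∀ x : X, x ≠ 0 → ∃! f : X →L[ℝ] ℝ, ‖f‖ = 1 ∧ f x = ‖x‖


/-! If `u ⊥_B y` then `u + ℝ ∙ y` has norm `‖u‖` in `X ⧸ ℝ ∙ y`, so Hahn-Banach on the quotient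
gives a norming functional of `u` vanishing at `y`. Strong orthonormality gives `x 0 ⊥_B w` for
`w = ∑_{j ≠ 0} α j • x j` as well; smoothness makes the two norming functionals of `x 0` one and
the same `f`, whence `0 = f (α 0 • x 0 + w) = α 0`. -/

/-- `u ⊥_B y` in the paper's notation. -/
def BirkhoffJamesOrthogonal {X : Type*} [NormedAddCommGroup X] [NormedSpace ℝ X]
    (u y : X) : Prop :=
  ∀ l : ℝ, ‖u‖ ≤ ‖u + l • y‖

theorem exists_norming_functional_vanishing_on_of_forall_norm_le_norm_add
    {𝕜 X : Type*} [RCLike 𝕜] [NormedAddCommGroup X] [NormedSpace 𝕜 X]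
    (S : Submodule 𝕜 X) [IsClosed (S : Set X)] {u : X} (hu : u ≠ 0)
    (h : ∀ s ∈ S, ‖u‖ ≤ ‖u + s‖) :
    ∃ f : StrongDual 𝕜 X, ‖f‖ = 1 ∧ f u = ‖u‖ ∧ ∀ s ∈ S, f s = 0 := by
  have hnorm : ‖S.mkQ u‖ = ‖u‖ := by
    refine le_antisymm (Submodule.Quotient.norm_mk_le S u) ?_
    rw [Submodule.mkQ_apply]
    change ‖u‖ ≤ ‖(u : X ⧸ S.toAddSubgroup)‖
    rw [QuotientAddGroup.norm_mk]
    refine (Metric.le_infDist ⟨0, S.zero_mem⟩).mpr fun s hs => ?_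
    simpa [dist_eq_norm, sub_eq_add_neg] using h (-s) (S.neg_mem hs)
  obtain ⟨g, hg1, hgu⟩ :=
    exists_dual_vector 𝕜 (S.mkQ u) (by rw [hnorm]; exact norm_ne_zero_iff.mpr hu)
  set f := g.comp S.mkQL
  have hfu : f u = ‖u‖ := by rw [← hnorm, ← hgu]; rfl
  refine ⟨f, le_antisymm ?_ ?_, hfu, fun s hs => ?_⟩
  · refine f.opNorm_le_bound zero_le_one fun v => ?_
    calc ‖f v‖ ≤ ‖g‖ * ‖S.mkQ v‖ := g.le_opNorm _
      _ ≤ 1 * ‖v‖ := by rw [hg1, one_mul, one_mul]; exact Submodule.Quotient.norm_mk_le S v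
  · have := f.le_opNorm u
    rw [hfu, RCLike.norm_ofReal, abs_norm] at this
    exact le_of_mul_le_mul_right (by rwa [one_mul]) (norm_pos_iff.mpr hu)
  · change g (S.mkQ s) = 0
    rw [Submodule.mkQ_apply, (Submodule.Quotient.mk_eq_zero S).mpr hs, map_zero]

theorem BirkhoffJamesOrthogonal.exists_norming_functional {X : Type*} [NormedAddCommGroup X]
    [NormedSpace ℝ X] {u y : X} (h : BirkhoffJamesOrthogonal u y) (hu : u ≠ 0) :
    ∃ f : StrongDual ℝ X, ‖f‖ = 1 ∧ f u = ‖u‖ ∧ f y = 0 := by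
  have : IsClosed ((ℝ ∙ y : Submodule ℝ X) : Set X) := Submodule.closed_of_finiteDimensional _
  obtain ⟨f, hf1, hfu, hfy⟩ :=
    exists_norming_functional_vanishing_on_of_forall_norm_le_norm_add (ℝ ∙ y) hu fun s hs => by
      obtain ⟨l, rfl⟩ := Submodule.mem_span_singleton.mp hs
      exact h l
  exact ⟨f, hf1, hfu, hfy y (Submodule.mem_span_singleton_self y)⟩

theorem StronglyOrthRel.birkhoffJamesOrthogonal_sum_erase {X : Type*} [NormedAddCommGroup X]
    [NormedSpace ℝ X] {n : ℕ} {x : Fin n → X} {i : Fin n} (h : StronglyOrthRel x i)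
    (c : Fin n → ℝ) : BirkhoffJamesOrthogonal (x i) (∑ j ∈ Finset.univ.erase i, c j • x j) := by
  intro l
  simp only [Finset.smul_sum, smul_smul]
  by_cases hc : ∃ j, j ≠ i ∧ l * c j ≠ 0
  · exact (h.2 (fun j => l * c j) hc).le
  · push Not at hc
    rw [Finset.sum_eq_zero fun j hj => by rw [hc j (Finset.ne_of_mem_erase hj), zero_smul],
      add_zero]

theorem stmt_12_general {X : Type*} [NormedAddCommGroup X] [NormedSpace ℝ X] {n : ℕ}
    (hsm : SmoothSpace X) (x : Fin (n + 1) → X)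
    (hso : StronglyOrthSet x) (α : Fin (n + 1) → ℝ)
    (horth : ∀ l : ℝ, ‖x 0‖ ≤ ‖x 0 + l • ∑ j, α j • x j‖) :
    α 0 = 0 := by
  have hx0 : ‖x 0‖ = 1 := (hso 0).1 0
  have hx0_ne : x 0 ≠ 0 := norm_ne_zero_iff.mp (by rw [hx0]; exact one_ne_zero)
  obtain ⟨f, hf1, hfx, hfy⟩ :=
    BirkhoffJamesOrthogonal.exists_norming_functional (u := x 0) horth hx0_ne
  obtain ⟨g, hg1, hgx, hgw⟩ :=
    ((hso 0).birkhoffJamesOrthogonal_sum_erase α).exists_norming_functional hx0_ne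
  have hfg : f = g := (hsm _ hx0_ne).unique ⟨hf1, hfx⟩ ⟨hg1, hgx⟩
  calc α 0 = f (α 0 • x 0 + ∑ j ∈ Finset.univ.erase 0, α j • x j) := by
        rw [map_add, map_smul, hfg, hgw, hgx, hx0, smul_eq_mul, mul_one, add_zero]
    _ = 0 := by rw [Finset.add_sum_erase _ (fun j => α j • x j) (Finset.mem_univ 0), hfy]

theorem stmt_12 {X : Type*} [NormedAddCommGroup X] [NormedSpace ℝ X] {n : ℕ}
    (hsm : SmoothSpace X) (x : Fin (n + 1) → X)
    (hli : LinearIndependent ℝ x) (hsp : Submodule.span ℝ (Set.range x) = ⊤)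
    (hso : StronglyOrthSet x) (α : Fin (n + 1) → ℝ)
    (horth : ∀ l : ℝ, ‖x 0‖ ≤ ‖x 0 + l • ∑ j, α j • x j‖) :
    α 0 = 0 :=
  stmt_12_general hsm x hso α horth
end
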